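/- Let n = 2m+1 = k with m ≥ 2, t_i = i, and let p_1 > p_2 > … > p_n > 0 be strictly decreasing; set S(p) = ∑_{j=m+1}^{2m+1} 1/p_j. Then there exists ε > 0 such that the mixed searcher strategy that plays the set {j, n−j} with probability 1/(p_j S(p)) for each j = m+2,…,n, plays {m+1, m} with probability 1/(p_{m+1} S(p)) − ε, and plays {m+1, m−1} with probability ε, guarantees expected capture probability at least 1/S(p) against every hiding location i ∈ {1,…,n}. In particular the optimal searcher strategy is not unique. -/

import Mathlib

/-!
Location `i ≥ m + 2` is searched only by the set `{i, n - i}`, with probability `1 / (p i * S)`,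
so it is caught with probability exactly `1 / S`; a location `i ≤ m - 1` is searched at least by
`{n - i, i}`, and `p i > p (n - i)` makes its payoff at least `1 / S`. Locations `m + 1` and `m`
are covered only by the two extra sets; choosing `ε = 1 / (p (m + 1) * S) - 1 / (p m * S)`, which
is positive because `p` is strictly decreasing, gives each of them payoff exactly `1 / S`.
-/

open Finset

/-- For `j = n` the set is `{n}`, since `n - n = 0` is not a location. -/
abbrev pairSet (n j : ℕ) : Finset ℕ := if j = n then {n} else {j, n - j}

lemma mem_pairSet_iff {m n i j : ℕ} (hn : n = 2 * m + 1) (hi : 1 ≤ i)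
    (hj : j ∈ Icc (m + 2) n) : i ∈ pairSet n j ↔ j = max i (n - i) := by
  rw [mem_Icc] at hj
  unfold pairSet
  split_ifs <;> simp only [mem_insert, mem_singleton] <;> omega

lemma sum_ite_mem_pairSet {m n i : ℕ} (hn : n = 2 * m + 1) (hi₁ : 1 ≤ i) (hi₂ : i ≤ n)
    (f : ℕ → ℝ) :
    ∑ j ∈ Icc (m + 2) n, (if i ∈ pairSet n j then f j else 0) =
      if m + 2 ≤ max i (n - i) then f (max i (n - i)) else 0 := by
  rw [sum_congr rfl fun j hj => by rw [if_congr (mem_pairSet_iff hn hi₁ hj) rfl rfl],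
    sum_ite_eq']
  exact if_congr (by rw [mem_Icc]; omega) rfl rfl

lemma one_div_le_one_div_mul_mul {q r S : ℝ} (hq : 0 < q) (hqr : q ≤ r) (hS : 0 < S) :
    1 / S ≤ 1 / (q * S) * r :=
  calc 1 / S = 1 / (q * S) * q := by field_simp
    _ ≤ 1 / (q * S) * r := by gcongr

theorem searcher_strategy_not_unique_general (m n : ℕ) (hm : 2 ≤ m) (hn : n = 2 * m + 1)
    (p : ℕ → ℝ)
    (hpos : ∀ i ∈ Finset.Icc 1 n, 0 < p i)
    (hstrict : ∀ i j : ℕ, 1 ≤ i → i < j → j ≤ n → p j < p i)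
    (S : ℝ) (hS : S = ∑ j ∈ Finset.Icc (m + 1) n, 1 / p j) :
    ∃ ε : ℝ, 0 < ε ∧ 0 ≤ 1 / (p (m + 1) * S) - ε ∧
      ∀ i ∈ Finset.Icc 1 n,
        1 / S ≤
          ((∑ j ∈ Finset.Icc (m + 2) n,
              if i ∈ (if j = n then ({n} : Finset ℕ) else {j, n - j})
                then 1 / (p j * S) else 0)
            + (if i ∈ ({m + 1, m} : Finset ℕ) then 1 / (p (m + 1) * S) - ε else 0)
            + (if i ∈ ({m + 1, m - 1} : Finset ℕ) then ε else 0)) * p i := by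
  have hp : ∀ i, 1 ≤ i → i ≤ n → 0 < p i := fun i h₁ h₂ => hpos i (mem_Icc.2 ⟨h₁, h₂⟩)
  have hanti : ∀ i j, 1 ≤ i → i ≤ j → j ≤ n → p j ≤ p i := fun i j h₁ hij h₂ =>
    hij.eq_or_lt.elim (fun h => h ▸ le_rfl) fun h => (hstrict i j h₁ h h₂).le
  have hS₀ : 0 < S := hS ▸ sum_pos
    (fun j hj => one_div_pos.2 (hp j (by have := mem_Icc.1 hj; omega) (mem_Icc.1 hj).2))
    ⟨m + 1, mem_Icc.2 ⟨le_rfl, by omega⟩⟩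
  have hε : 1 / (p m * S) < 1 / (p (m + 1) * S) :=
    one_div_lt_one_div_of_lt (mul_pos (hp (m + 1) (by omega) (by omega)) hS₀)
      (mul_lt_mul_of_pos_right (hstrict m (m + 1) (by omega) (by omega) (by omega)) hS₀)
  refine ⟨1 / (p (m + 1) * S) - 1 / (p m * S), sub_pos.2 hε, ?_, fun i hi => ?_⟩
  · rw [sub_sub_cancel]; have := hp m (by omega) (by omega); positivity
  obtain ⟨hi₁, hi₂⟩ := mem_Icc.1 hi
  rw [sum_ite_mem_pairSet hn hi₁ hi₂]
  by_cases hj : m + 2 ≤ max i (n - i)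
  · have hpj := hp _ (by omega) (by omega : max i (n - i) ≤ n)
    rw [if_pos hj, if_neg (by simp only [mem_insert, mem_singleton]; omega)]
    calc 1 / S ≤ 1 / (p (max i (n - i)) * S) * p i :=
          one_div_le_one_div_mul_mul hpj (hanti _ _ hi₁ (le_max_left _ _) (by omega)) hS₀
      _ ≤ _ := by
          refine mul_le_mul_of_nonneg_right ?_ (hp i hi₁ hi₂).le
          split_ifs <;> linarith
  · rw [if_neg hj, zero_add]
    obtain rfl | rfl : i = m + 1 ∨ i = m := by omega
    · rw [if_pos (by simp), if_pos (by simp), sub_add_cancel]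
      exact one_div_le_one_div_mul_mul (hp _ hi₁ hi₂) le_rfl hS₀
    · rw [if_pos (by simp), if_neg (by simp only [mem_insert, mem_singleton]; omega), add_zero,
        sub_sub_cancel]
      exact one_div_le_one_div_mul_mul (hp _ hi₁ hi₂) le_rfl hS₀

/-- For `n = 2m+1 = k` with `m ≥ 2`, `t_i = i` and strictly decreasing positive
capture probabilities `p`, with `S(p) = ∑_{j=m+1}^{2m+1} 1/p_j`, there is an
`ε > 0` such that the mixed searcher strategy playing `{j, n−j}` with
probability `1/(p_j S(p))` for `j = m+2,…,n`, playing `{m+1, m}` with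
probability `1/(p_{m+1} S(p)) − ε`, and playing `{m+1, m−1}` with probability
`ε`, guarantees expected capture probability at least `1/S(p)` against every
hiding location `i ∈ {1,…,n}`; hence the optimal searcher strategy is not
unique. -/
theorem searcher_strategy_not_unique (m n : ℕ) (hm : 2 ≤ m) (hn : n = 2 * m + 1)
    (p : ℕ → ℝ)
    (hpos : ∀ i ∈ Finset.Icc 1 n, 0 < p i)
    (hple : ∀ i ∈ Finset.Icc 1 n, p i ≤ 1)
    (hstrict : ∀ i j : ℕ, 1 ≤ i → i < j → j ≤ n → p j < p i)
    (S : ℝ) (hS : S = ∑ j ∈ Finset.Icc (m + 1) n, 1 / p j) :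
    ∃ ε : ℝ, 0 < ε ∧ 0 ≤ 1 / (p (m + 1) * S) - ε ∧
      ∀ i ∈ Finset.Icc 1 n,
        1 / S ≤
          ((∑ j ∈ Finset.Icc (m + 2) n,
              if i ∈ (if j = n then ({n} : Finset ℕ) else {j, n - j})
                then 1 / (p j * S) else 0)
            + (if i ∈ ({m + 1, m} : Finset ℕ) then 1 / (p (m + 1) * S) - ε else 0)
            + (if i ∈ ({m + 1, m - 1} : Finset ℕ) then ε else 0)) * p i :=
  searcher_strategy_not_unique_general m n hm hn p hpos hstrict S hS
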